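/- Boundary acceleration formula (eq:left-acceleration): let θ > 0, c_θ := θ/(θ+1), b > 0, let I ⊂ ℝ be an open interval, and let p0 : [0,b] → ℝ be continuously differentiable (one-sided at 0) with p0(0) = 0. Let γ : [0,b) × I → ℝ be continuous, twice continuously differentiable on (0,b) × I with ∂_y γ > 0 there, and set Z := (∂_y γ)^{−(θ+1)} on (0,b) × I. Fix 0 < ρ0 < b and assume: Z extends to a continuous function on [0,ρ0] × I; Z is continuously differentiable on (0,ρ0] × I; for every compact J ⊂ I the functions ∂_t γ and ∂_{tt} γ are bounded on (0,ρ0] × J; and the equation ∂_{tt} γ(y,t) = p0'(y)·Z(y,t) + c_θ·p0(y)·∂_y Z(y,t) holds on (0,b) × I. Define γ_L(t) := γ(0,t). Then γ_L is twice differentiable on I and γ_L''(t) = p0'(0)·Z(0,t) for every t ∈ I. -/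

import Mathlib

open Set MeasureTheory

/-- Partial derivative in the first (Lagrangian space) variable. -/
noncomputable def dy (f : ℝ → ℝ → ℝ) (y t : ℝ) : ℝ := deriv (fun y' => f y' t) y

/-- Partial derivative in the second (time) variable. -/
noncomputable def dt (f : ℝ → ℝ → ℝ) (y t : ℝ) : ℝ := deriv (fun t' => f y t') t

/-- `Z := (∂_y γ)^{-(θ+1)}`. -/
noncomputable def Zfun (θ : ℝ) (γ : ℝ → ℝ → ℝ) (y t : ℝ) : ℝ :=
  (dy γ y t) ^ (-(θ + 1))

/-- The average of `f (·, t)` over `(0, ρ)`. -/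
noncomputable def Gav (f : ℝ → ℝ → ℝ) (ρ t : ℝ) : ℝ := ρ⁻¹ * ∫ y in (0:ℝ)..ρ, f y t

/-- Differentiation under the integral sign for averages. -/
lemma Gav_hasDerivAt (f : ℝ → ℝ → ℝ) (ρ t ε M : ℝ) (hρ : 0 < ρ) (hε : 0 < ε)
    (hmeas : ∀ x ∈ Metric.ball t ε,
      AEStronglyMeasurable (fun y => f y x) (volume.restrict (Set.Ioc 0 ρ)))
    (hint : IntervalIntegrable (fun y => f y t) volume 0 ρ)
    (hmeas' : AEStronglyMeasurable (fun y => dt f y t) (volume.restrict (Set.Ioc 0 ρ)))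
    (hbound : ∀ y ∈ Set.Ioc 0 ρ, ∀ x ∈ Metric.ball t ε, |dt f y x| ≤ M)
    (hdiff : ∀ y ∈ Set.Ioc 0 ρ, ∀ x ∈ Metric.ball t ε,
      HasDerivAt (fun s => f y s) (dt f y x) x) :
    HasDerivAt (fun s => Gav f ρ s) (Gav (dt f) ρ t) t := by
  have hι : Set.uIoc (0:ℝ) ρ = Set.Ioc 0 ρ := Set.uIoc_of_le hρ.le
  have H := intervalIntegral.hasDerivAt_integral_of_dominated_loc_of_deriv_le
      (F := fun x y => f y x) (F' := fun x y => dt f y x) (x₀ := t) (a := (0:ℝ)) (b := ρ)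
      (bound := fun _ => M) (μ := volume) (Metric.ball_mem_nhds t hε)
      (by filter_upwards [Metric.ball_mem_nhds t hε] with x hx
          rw [hι]; exact hmeas x hx)
      hint
      (by rw [hι]; exact hmeas')
      (ae_of_all _ fun y hy x hx => by
        rw [hι] at hy; rw [Real.norm_eq_abs]; exact hbound y hy x hx)
      intervalIntegrable_const
      (ae_of_all _ fun y hy x hx => by
        rw [hι] at hy; exact hdiff y hy x hx)
  simpa only [Gav] using H.2.const_mul ρ⁻¹

/-- If `f` is within `C` of `K` on `(0,ρ]`, then its average over `(0,ρ)` is within `C` of `K`. -/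
lemma Gav_sub_const (f : ℝ → ℝ) (ρ K C : ℝ) (hρ : 0 < ρ)
    (hint : IntervalIntegrable f volume 0 ρ)
    (hbound : ∀ y ∈ Set.Ioc 0 ρ, |f y - K| ≤ C) :
    |ρ⁻¹ * (∫ y in (0:ℝ)..ρ, f y) - K| ≤ C := by
  have heqn : ρ⁻¹ * (∫ y in (0:ℝ)..ρ, f y) - K
      = ρ⁻¹ * ∫ y in (0:ℝ)..ρ, (f y - K) := by
    rw [intervalIntegral.integral_sub hint intervalIntegrable_const,
      intervalIntegral.integral_const, smul_eq_mul, sub_zero, mul_sub,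
      ← mul_assoc, inv_mul_cancel₀ hρ.ne', one_mul]
  have hbnd : ‖∫ y in (0:ℝ)..ρ, (f y - K)‖ ≤ C * |ρ - 0| := by
    apply intervalIntegral.norm_integral_le_of_norm_le_const
    intro y hy
    rw [Set.uIoc_of_le hρ.le] at hy
    simpa [Real.norm_eq_abs] using hbound y hy
  rw [Real.norm_eq_abs] at hbnd
  rw [heqn, abs_mul, abs_of_pos (inv_pos.mpr hρ)]
  calc ρ⁻¹ * |∫ y in (0:ℝ)..ρ, (f y - K)| ≤ ρ⁻¹ * (C * |ρ - 0|) :=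
        mul_le_mul_of_nonneg_left hbnd (inv_pos.mpr hρ).le
    _ = C := by rw [sub_zero, abs_of_pos hρ]; field_simp
set_option maxHeartbeats 4000000 in
theorem stmt_15
    (θ b ρ0 t0 t1 : ℝ) (hθ : 0 < θ) (hb : 0 < b) (hI : t0 < t1)
    (hρ0 : 0 < ρ0) (hρ0b : ρ0 < b)
    (p0 : ℝ → ℝ) (hp0 : ContDiffOn ℝ 1 p0 (Set.Icc 0 b)) (hp00 : p0 0 = 0)
    (γ : ℝ → ℝ → ℝ)
    (hcont : ContinuousOn (fun p : ℝ × ℝ => γ p.1 p.2)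
      (Set.Ico 0 b ×ˢ Set.Ioo t0 t1))
    (hγ : ContDiffOn ℝ 2 (fun p : ℝ × ℝ => γ p.1 p.2)
      (Set.Ioo 0 b ×ˢ Set.Ioo t0 t1))
    (hpos : ∀ y ∈ Set.Ioo 0 b, ∀ t ∈ Set.Ioo t0 t1, 0 < dy γ y t)
    (Zbar : ℝ → ℝ → ℝ)
    (hZbarcont : ContinuousOn (fun p : ℝ × ℝ => Zbar p.1 p.2)
      (Set.Icc 0 ρ0 ×ˢ Set.Ioo t0 t1))
    (hZbar : ∀ y ∈ Set.Ioc 0 ρ0, ∀ t ∈ Set.Ioo t0 t1, Zbar y t = Zfun θ γ y t)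
    (hZC1 : ContDiffOn ℝ 1 (fun p : ℝ × ℝ => Zfun θ γ p.1 p.2)
      (Set.Ioc 0 ρ0 ×ˢ Set.Ioo t0 t1))
    (hbdd : ∀ J : Set ℝ, IsCompact J → J ⊆ Set.Ioo t0 t1 →
      ∃ M : ℝ, ∀ y ∈ Set.Ioc 0 ρ0, ∀ t ∈ J, |dt γ y t| ≤ M ∧ |dt (dt γ) y t| ≤ M)
    (heq : ∀ y ∈ Set.Ioo 0 b, ∀ t ∈ Set.Ioo t0 t1,
      dt (dt γ) y t
        = derivWithin p0 (Set.Icc 0 b) y * Zfun θ γ y t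
          + (θ / (θ + 1)) * p0 y * dy (Zfun θ γ) y t) :
    ∃ g' : ℝ → ℝ, ∀ t ∈ Set.Ioo t0 t1,
      HasDerivAt (fun s => γ 0 s) (g' t) t ∧
      HasDerivAt g' (derivWithin p0 (Set.Icc 0 b) 0 * Zbar 0 t) t := by
  classical
  set c : ℝ := θ / (θ + 1) with hc
  have hθ1 : (0:ℝ) < θ + 1 := by linarith
  have hc0 : 0 < c := div_pos hθ hθ1
  have hc1 : c < 1 := (div_lt_one hθ1).mpr (by linarith)
  set p0' : ℝ → ℝ := fun y => derivWithin p0 (Set.Icc 0 b) y with hp0'def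
  set h : ℝ → ℝ := fun u => p0' 0 * Zbar 0 u with hhdef
  have hIopen : IsOpen (Set.Ioo t0 t1) := isOpen_Ioo
  set U : Set (ℝ × ℝ) := Set.Ioo 0 b ×ˢ Set.Ioo t0 t1 with hUdef
  have hUopen : IsOpen U := isOpen_Ioo.prod isOpen_Ioo
  set F : ℝ × ℝ → ℝ := fun p => γ p.1 p.2 with hFdef
  -- basic subset facts
  have hIocIoo : ∀ ρ, ρ ≤ ρ0 → Set.Ioc 0 ρ ⊆ Set.Ioo 0 b := fun ρ hρ y hy =>
    ⟨hy.1, lt_of_le_of_lt (hy.2.trans hρ) hρ0b⟩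
  have hIccIco : ∀ ρ, ρ ≤ ρ0 → Set.Icc 0 ρ ⊆ Set.Ico 0 b := fun ρ hρ y hy =>
    ⟨hy.1, lt_of_le_of_lt (hy.2.trans hρ) hρ0b⟩
  -- partial derivatives of γ in time
  have hFdiff : ∀ p ∈ U, DifferentiableAt ℝ F p := fun p hp =>
    (hγ.differentiableOn (by norm_num)).differentiableAt (hUopen.mem_nhds hp)
  set G1fun : ℝ × ℝ → ℝ := fun p => fderiv ℝ F p (0, 1) with hG1def
  have hdtγ : ∀ y ∈ Set.Ioo 0 b, ∀ t ∈ Set.Ioo t0 t1,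
      HasDerivAt (fun s => γ y s) (G1fun (y, t)) t := by
    intro y hy t ht
    have h1 : HasDerivAt (fun s : ℝ => ((y, s) : ℝ × ℝ)) (0, 1) t :=
      (hasDerivAt_const t y).prodMk (hasDerivAt_id t)
    exact (hFdiff (y, t) ⟨hy, ht⟩).hasFDerivAt.comp_hasDerivAt t h1
  have hdtγ_eq : ∀ y ∈ Set.Ioo 0 b, ∀ t ∈ Set.Ioo t0 t1, dt γ y t = G1fun (y, t) :=
    fun y hy t ht => (hdtγ y hy t ht).deriv
  have hG1C : ContDiffOn ℝ 1 G1fun U := by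
    have := hγ.fderiv_of_isOpen (m := 1) hUopen (by norm_num)
    exact (ContinuousLinearMap.apply ℝ ℝ ((0:ℝ), (1:ℝ))).contDiff.comp_contDiffOn this
  have hG1diff : ∀ p ∈ U, DifferentiableAt ℝ G1fun p := fun p hp =>
    (hG1C.differentiableOn one_ne_zero).differentiableAt (hUopen.mem_nhds hp)
  set G2fun : ℝ × ℝ → ℝ := fun p => fderiv ℝ G1fun p (0, 1) with hG2def
  have hdt2γ : ∀ y ∈ Set.Ioo 0 b, ∀ t ∈ Set.Ioo t0 t1,
      HasDerivAt (fun s => dt γ y s) (G2fun (y, t)) t := by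
    intro y hy t ht
    have h1 : HasDerivAt (fun s : ℝ => ((y, s) : ℝ × ℝ)) (0, 1) t :=
      (hasDerivAt_const t y).prodMk (hasDerivAt_id t)
    have h2 : HasDerivAt (fun s => G1fun (y, s)) (G2fun (y, t)) t :=
      (hG1diff (y, t) ⟨hy, ht⟩).hasFDerivAt.comp_hasDerivAt t h1
    apply h2.congr_of_eventuallyEq
    filter_upwards [hIopen.mem_nhds ht] with s hs
    exact hdtγ_eq y hy s hs
  have hdt2γ_eq : ∀ y ∈ Set.Ioo 0 b, ∀ t ∈ Set.Ioo t0 t1,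
      dt (dt γ) y t = G2fun (y, t) := fun y hy t ht => (hdt2γ y hy t ht).deriv
  have hG1cont : ContinuousOn G1fun U := hG1C.continuousOn
  have hG2cont : ContinuousOn G2fun U :=
    (ContinuousLinearMap.apply ℝ ℝ ((0:ℝ), (1:ℝ))).continuous.comp_continuousOn
      (hG1C.continuousOn_fderiv_of_isOpen hUopen le_rfl)
  -- p0 facts
  have hp0cont : ContinuousOn p0 (Set.Icc 0 b) := hp0.continuousOn
  have hp0'cont : ContinuousOn p0' (Set.Icc 0 b) :=
    hp0.continuousOn_derivWithin (uniqueDiffOn_Icc hb) le_rfl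
  have hp0deriv : ∀ y ∈ Set.Ioo 0 b, HasDerivAt p0 (p0' y) y := by
    intro y hy
    have h1 : Set.Icc (0:ℝ) b ∈ nhds y := Icc_mem_nhds hy.1 hy.2
    exact ((hp0.differentiableOn one_ne_zero y (Set.mem_Icc.mpr ⟨hy.1.le, hy.2.le⟩)).hasDerivWithinAt).hasDerivAt h1
  have hp0at0 : HasDerivWithinAt p0 (p0' 0) (Set.Icc 0 b) 0 :=
    (hp0.differentiableOn one_ne_zero 0 (Set.mem_Icc.mpr ⟨le_rfl, hb.le⟩)).hasDerivWithinAt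
  -- measurability of slices
  have hmeasγ : ∀ ρ, 0 < ρ → ρ ≤ ρ0 → ∀ x ∈ Set.Ioo t0 t1,
      AEStronglyMeasurable (fun y => γ y x) (volume.restrict (Set.Ioc 0 ρ)) := by
    intro ρ hρ hρρ0 x hx
    have h1 : ContinuousOn (fun y => γ y x) (Set.Ico 0 b) :=
      hcont.comp ((continuous_id.prodMk continuous_const).continuousOn)
        (fun y hy => ⟨hy, hx⟩)
    exact (h1.mono ((Set.Ioc_subset_Icc_self).trans (hIccIco ρ hρρ0))).aestronglyMeasurable
      measurableSet_Ioc
  have hmeasdtγ : ∀ ρ, 0 < ρ → ρ ≤ ρ0 → ∀ x ∈ Set.Ioo t0 t1,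
      AEStronglyMeasurable (fun y => dt γ y x) (volume.restrict (Set.Ioc 0 ρ)) := by
    intro ρ hρ hρρ0 x hx
    have h1 : ContinuousOn (fun y => G1fun (y, x)) (Set.Ioc 0 ρ) :=
      hG1cont.comp ((continuous_id.prodMk continuous_const).continuousOn)
        (fun y hy => ⟨hIocIoo ρ hρρ0 hy, hx⟩)
    have h2 : ContinuousOn (fun y => dt γ y x) (Set.Ioc 0 ρ) :=
      h1.congr (fun y hy => hdtγ_eq y (hIocIoo ρ hρρ0 hy) x hx)
    exact h2.aestronglyMeasurable measurableSet_Ioc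
  have hmeasdt2γ : ∀ ρ, 0 < ρ → ρ ≤ ρ0 → ∀ x ∈ Set.Ioo t0 t1,
      AEStronglyMeasurable (fun y => dt (dt γ) y x) (volume.restrict (Set.Ioc 0 ρ)) := by
    intro ρ hρ hρρ0 x hx
    have h1 : ContinuousOn (fun y => G2fun (y, x)) (Set.Ioc 0 ρ) :=
      hG2cont.comp ((continuous_id.prodMk continuous_const).continuousOn)
        (fun y hy => ⟨hIocIoo ρ hρρ0 hy, hx⟩)
    have h2 : ContinuousOn (fun y => dt (dt γ) y x) (Set.Ioc 0 ρ) :=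
      h1.congr (fun y hy => hdt2γ_eq y (hIocIoo ρ hρρ0 hy) x hx)
    exact h2.aestronglyMeasurable measurableSet_Ioc
  -- integrability of time-derivative slices
  have hintdtγ : ∀ ρ, 0 < ρ → ρ ≤ ρ0 → ∀ x ∈ Set.Ioo t0 t1,
      IntervalIntegrable (fun y => dt γ y x) volume 0 ρ := by
    intro ρ hρ hρρ0 x hx
    obtain ⟨M, hM⟩ := hbdd {x} isCompact_singleton (by simpa using hx)
    refine (intervalIntegrable_const (c := M)).mono_fun (by
      rw [Set.uIoc_of_le hρ.le]; exact hmeasdtγ ρ hρ hρρ0 x hx) ?_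
    refine (ae_restrict_iff' measurableSet_uIoc).mpr (ae_of_all _ fun y hy => ?_)
    rw [Set.uIoc_of_le hρ.le] at hy
    have := (hM y (⟨hy.1, hy.2.trans hρρ0⟩) x rfl).1
    simp only [Real.norm_eq_abs]
    exact this.trans (le_abs_self M)
  have hintdt2γ : ∀ ρ, 0 < ρ → ρ ≤ ρ0 → ∀ x ∈ Set.Ioo t0 t1,
      IntervalIntegrable (fun y => dt (dt γ) y x) volume 0 ρ := by
    intro ρ hρ hρρ0 x hx
    obtain ⟨M, hM⟩ := hbdd {x} isCompact_singleton (by simpa using hx)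
    refine (intervalIntegrable_const (c := M)).mono_fun (by
      rw [Set.uIoc_of_le hρ.le]; exact hmeasdt2γ ρ hρ hρρ0 x hx) ?_
    refine (ae_restrict_iff' measurableSet_uIoc).mpr (ae_of_all _ fun y hy => ?_)
    rw [Set.uIoc_of_le hρ.le] at hy
    have := (hM y (⟨hy.1, hy.2.trans hρρ0⟩) x rfl).2
    simp only [Real.norm_eq_abs]
    exact this.trans (le_abs_self M)
  -- derivative of averaged gamma
  have hball : ∀ t ∈ Set.Ioo t0 t1, ∃ ε > 0, Metric.closedBall t ε ⊆ Set.Ioo t0 t1 := by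
    intro t ht
    rcases (Metric.nhds_basis_closedBall.mem_iff).mp (hIopen.mem_nhds ht) with ⟨ε, hε, hsub⟩
    exact ⟨ε, hε, hsub⟩
  have hG1deriv : ∀ ρ, 0 < ρ → ρ ≤ ρ0 → ∀ t ∈ Set.Ioo t0 t1,
      HasDerivAt (fun s => Gav γ ρ s) (Gav (dt γ) ρ t) t := by
    intro ρ hρ hρρ0 t ht
    obtain ⟨ε, hε, hsub⟩ := hball t ht
    obtain ⟨M, hM⟩ := hbdd _ (isCompact_closedBall t ε) hsub
    refine Gav_hasDerivAt γ ρ t ε M hρ hε ?_ ?_ ?_ ?_ ?_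
    · exact fun x hx => hmeasγ ρ hρ hρρ0 x (hsub (Metric.ball_subset_closedBall hx))
    · have h1 : ContinuousOn (fun y => γ y t) (Set.Icc 0 ρ) :=
        (hcont.comp ((continuous_id.prodMk continuous_const).continuousOn)
          (fun y hy => ⟨hy, ht⟩)).mono (hIccIco ρ hρρ0)
      exact (h1.mono (by rw [Set.uIcc_of_le hρ.le])).intervalIntegrable
    · exact hmeasdtγ ρ hρ hρρ0 t ht
    · intro y hy x hx
      exact (hM y ⟨hy.1, hy.2.trans hρρ0⟩ x (Metric.ball_subset_closedBall hx)).1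
    · intro y hy x hx
      have hyb := hIocIoo ρ hρρ0 hy
      have hxI := hsub (Metric.ball_subset_closedBall hx)
      have := hdtγ y hyb x hxI
      rwa [← hdtγ_eq y hyb x hxI] at this
  have hG2deriv : ∀ ρ, 0 < ρ → ρ ≤ ρ0 → ∀ t ∈ Set.Ioo t0 t1,
      HasDerivAt (fun s => Gav (dt γ) ρ s) (Gav (dt (dt γ)) ρ t) t := by
    intro ρ hρ hρρ0 t ht
    obtain ⟨ε, hε, hsub⟩ := hball t ht
    obtain ⟨M, hM⟩ := hbdd _ (isCompact_closedBall t ε) hsub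
    refine Gav_hasDerivAt (dt γ) ρ t ε M hρ hε ?_ ?_ ?_ ?_ ?_
    · exact fun x hx => hmeasdtγ ρ hρ hρρ0 x (hsub (Metric.ball_subset_closedBall hx))
    · exact hintdtγ ρ hρ hρρ0 t ht
    · exact hmeasdt2γ ρ hρ hρρ0 t ht
    · intro y hy x hx
      exact (hM y ⟨hy.1, hy.2.trans hρρ0⟩ x (Metric.ball_subset_closedBall hx)).2
    · intro y hy x hx
      have hyb := hIocIoo ρ hρρ0 hy
      have hxI := hsub (Metric.ball_subset_closedBall hx)
      have := hdt2γ y hyb x hxI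
      rwa [← hdt2γ_eq y hyb x hxI] at this
  -- continuity in time of the averaged second derivative
  have hG2contAt : ∀ ρ, 0 < ρ → ρ ≤ ρ0 → ∀ u ∈ Set.Ioo t0 t1,
      ContinuousAt (fun x => Gav (dt (dt γ)) ρ x) u := by
    intro ρ hρ hρρ0 u hu
    obtain ⟨ε, hε, hsub⟩ := hball u hu
    obtain ⟨M, hM⟩ := hbdd _ (isCompact_closedBall u ε) hsub
    have h1 : ContinuousAt (fun x => ∫ y in (0:ℝ)..ρ, dt (dt γ) y x) u := by
      apply intervalIntegral.continuousAt_of_dominated_interval (bound := fun _ => M)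
      · filter_upwards [hIopen.mem_nhds (hsub (Metric.mem_closedBall_self hε.le))] with x hx
        rw [Set.uIoc_of_le hρ.le]
        exact hmeasdt2γ ρ hρ hρρ0 x hx
      · filter_upwards [Metric.closedBall_mem_nhds u hε] with x hx
        refine ae_of_all _ fun y hy => ?_
        rw [Set.uIoc_of_le hρ.le] at hy
        rw [Real.norm_eq_abs]
        exact (hM y ⟨hy.1, hy.2.trans hρρ0⟩ x hx).2
      · exact intervalIntegrable_const
      · refine ae_of_all _ fun y hy => ?_
        rw [Set.uIoc_of_le hρ.le] at hy
        have hyb := hIocIoo ρ hρρ0 hy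
        have h2 : ContinuousAt (fun x => G2fun (y, x)) u :=
          (hG2cont.continuousAt (hUopen.mem_nhds ⟨hyb, hu⟩)).comp
            ((continuous_const.prodMk continuous_id).continuousAt)
        apply h2.congr
        filter_upwards [hIopen.mem_nhds hu] with x hx
        exact (hdt2γ_eq y hyb x hx).symm
    simpa only [Gav] using h1.const_mul ρ⁻¹
  -- uIcc of points in the interval
  have huIcc : ∀ a ∈ Set.Ioo t0 t1, ∀ t ∈ Set.Ioo t0 t1,
      Set.uIcc a t ⊆ Set.Ioo t0 t1 := by
    intro a ha t ht u hu
    exact ⟨lt_of_lt_of_le (lt_min ha.1 ht.1) hu.1, lt_of_le_of_lt hu.2 (max_lt ha.2 ht.2)⟩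
  -- Taylor identity
  have hTaylor : ∀ a ∈ Set.Ioo t0 t1, ∀ t ∈ Set.Ioo t0 t1, ∀ ρ, 0 < ρ → ρ ≤ ρ0 →
      Gav γ ρ t - Gav γ ρ a - Gav (dt γ) ρ a * (t - a)
        = ∫ s in a..t, (∫ u in a..s, Gav (dt (dt γ)) ρ u) := by
    intro a ha t ht ρ hρ hρρ0
    have hsubI := huIcc a ha t ht
    have hG1contOn : ContinuousOn (fun s => Gav (dt γ) ρ s) (Set.uIcc a t) :=
      fun s hs => ((hG2deriv ρ hρ hρρ0 s (hsubI hs)).continuousAt).continuousWithinAt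
    have hG2contOn : ContinuousOn (fun s => Gav (dt (dt γ)) ρ s) (Set.uIcc a t) :=
      fun s hs => (hG2contAt ρ hρ hρρ0 s (hsubI hs)).continuousWithinAt
    have hstep1 : ∫ s in a..t, Gav (dt γ) ρ s = Gav γ ρ t - Gav γ ρ a :=
      intervalIntegral.integral_eq_sub_of_hasDerivAt
        (fun s hs => hG1deriv ρ hρ hρρ0 s (hsubI hs)) hG1contOn.intervalIntegrable
    have hstep2 : ∀ s ∈ Set.uIcc a t,
        ∫ u in a..s, Gav (dt (dt γ)) ρ u = Gav (dt γ) ρ s - Gav (dt γ) ρ a := by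
      intro s hs
      refine intervalIntegral.integral_eq_sub_of_hasDerivAt
        (fun u hu => hG2deriv ρ hρ hρρ0 u (hsubI (Set.uIcc_subset_uIcc left_mem_uIcc hs hu)))
        ((hG2contOn.mono (Set.uIcc_subset_uIcc left_mem_uIcc hs)).intervalIntegrable)
    have hcongr : ∫ s in a..t, (∫ u in a..s, Gav (dt (dt γ)) ρ u)
        = ∫ s in a..t, (Gav (dt γ) ρ s - Gav (dt γ) ρ a) :=
      intervalIntegral.integral_congr (fun s hs => hstep2 s hs)
    rw [hcongr, intervalIntegral.integral_sub hG1contOn.intervalIntegrable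
      intervalIntegrable_const, hstep1, intervalIntegral.integral_const]
    ring_nf
  -- slice continuity of Zbar
  have hZy : ∀ t ∈ Set.Ioo t0 t1, ContinuousOn (fun y => Zbar y t) (Set.Icc 0 ρ0) :=
    fun t ht => hZbarcont.comp ((continuous_id.prodMk continuous_const).continuousOn)
      (fun y hy => ⟨hy, ht⟩)
  have hVopen : IsOpen (Set.Ioo 0 ρ0 ×ˢ Set.Ioo t0 t1) := isOpen_Ioo.prod isOpen_Ioo
  -- the closed form for the averaged second time derivative
  have hB : ∀ ρ, 0 < ρ → ρ ≤ ρ0 → ∀ t ∈ Set.Ioo t0 t1,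
      Gav (dt (dt γ)) ρ t
        = (1 - c) * Gav (fun y s => p0' y * Zbar y s) ρ t + c * (ρ⁻¹ * p0 ρ) * Zbar ρ t := by
    intro ρ hρ hρρ0 t ht
    have hIccsub : Set.Icc 0 ρ ⊆ Set.Icc 0 ρ0 := Set.Icc_subset_Icc le_rfl hρρ0
    have hIccb : Set.Icc 0 ρ ⊆ Set.Icc 0 b := Set.Icc_subset_Icc le_rfl (hρρ0.trans hρ0b.le)
    set ψ : ℝ → ℝ := fun y => p0' y * Zbar y t
      + c⁻¹ * (dt (dt γ) y t - p0' y * Zbar y t) with hψdef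
    have hAcont : ContinuousOn (fun y => p0' y * Zbar y t) (Set.Icc 0 ρ) :=
      ((hp0'cont.mono hIccb).mul ((hZy t ht).mono hIccsub))
    have hAint : IntervalIntegrable (fun y => p0' y * Zbar y t) volume 0 ρ :=
      (hAcont.mono (by rw [Set.uIcc_of_le hρ.le])).intervalIntegrable
    have hBint := hintdt2γ ρ hρ hρρ0 t ht
    have hψint : IntervalIntegrable ψ volume 0 ρ :=
      hAint.add ((hBint.sub hAint).const_mul c⁻¹)
    have hφcont : ContinuousOn (fun y => p0 y * Zbar y t) (Set.Icc 0 ρ) :=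
      ((hp0cont.mono hIccb).mul ((hZy t ht).mono hIccsub))
    have hφderiv : ∀ y ∈ Set.Ioo 0 ρ,
        HasDerivWithinAt (fun y' => p0 y' * Zbar y' t) (ψ y) (Set.Ioi y) y := by
      intro y hy
      have hyρ0 : y ∈ Set.Ioo 0 ρ0 := ⟨hy.1, lt_of_lt_of_le hy.2 hρρ0⟩
      have hyb : y ∈ Set.Ioo 0 b := ⟨hy.1, lt_of_le_of_lt (hy.2.le.trans hρρ0) hρ0b⟩
      have hZdiff : DifferentiableAt ℝ (fun y' => Zfun θ γ y' t) y := by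
        have hmem : Set.Ioc 0 ρ0 ×ˢ Set.Ioo t0 t1 ∈ nhds ((y, t) : ℝ × ℝ) :=
          Filter.mem_of_superset (hVopen.mem_nhds ⟨hyρ0, ht⟩)
            (Set.prod_mono Set.Ioo_subset_Ioc_self (le_refl _))
        have h2 : DifferentiableAt ℝ (fun p : ℝ × ℝ => Zfun θ γ p.1 p.2) (y, t) :=
          (hZC1.differentiableOn one_ne_zero).differentiableAt hmem
        have h3 : DifferentiableAt ℝ (fun y' : ℝ => ((y', t) : ℝ × ℝ)) y :=
          (differentiableAt_id.prodMk (differentiableAt_const t))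
        exact DifferentiableAt.comp y h2 h3
      have hZder : HasDerivAt (fun y' => Zfun θ γ y' t) (dy (Zfun θ γ) y t) y :=
        hZdiff.hasDerivAt
      have hZbarder : HasDerivAt (fun y' => Zbar y' t) (dy (Zfun θ γ) y t) y := by
        apply hZder.congr_of_eventuallyEq
        filter_upwards [isOpen_Ioo.mem_nhds hyρ0] with y' hy'
        exact hZbar y' (Set.Ioo_subset_Ioc_self hy') t ht
      have hprod := (hp0deriv y hyb).mul hZbarder
      have hkey : p0' y * Zbar y t + p0 y * dy (Zfun θ γ) y t = ψ y := by
        have he := heq y hyb t ht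
        have hZeq : Zfun θ γ y t = Zbar y t :=
          (hZbar y ⟨hy.1, hy.2.le.trans hρρ0⟩ t ht).symm
        rw [hZeq] at he
        rw [hψdef]
        field_simp
        linarith [he]
      rw [← hkey]
      exact ((hprod.congr_deriv (by ring)).hasDerivWithinAt)
    have hFTC : ∫ y in (0:ℝ)..ρ, ψ y = p0 ρ * Zbar ρ t := by
      have := intervalIntegral.integral_eq_sub_of_hasDeriv_right_of_le hρ.le hφcont
        hφderiv hψint
      rw [this, hp00]; ring
    have hsplit : ∀ y ∈ Set.uIcc (0:ℝ) ρ,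
        dt (dt γ) y t = (1 - c) * (p0' y * Zbar y t) + c * ψ y := by
      intro y _
      rw [hψdef]
      field_simp
      ring
    have hint_congr : ∫ y in (0:ℝ)..ρ, dt (dt γ) y t
        = ∫ y in (0:ℝ)..ρ, ((1 - c) * (p0' y * Zbar y t) + c * ψ y) :=
      intervalIntegral.integral_congr hsplit
    rw [Gav, hint_congr, intervalIntegral.integral_add (hAint.const_mul _)
      (hψint.const_mul _), intervalIntegral.integral_const_mul,
      intervalIntegral.integral_const_mul, hFTC, Gav]
    ring
  -- slope of p0 at 0 from the right
  have hslope : ∀ ε' : ℝ, 0 < ε' → ∃ δ' : ℝ, 0 < δ' ∧ ∀ ρ, 0 < ρ → ρ < δ' →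
      |ρ⁻¹ * p0 ρ - p0' 0| < ε' := by
    have h0 := hasDerivWithinAt_iff_tendsto_slope.mp hp0at0
    have hmono : nhdsWithin (0:ℝ) (Set.Ioc 0 b) ≤ nhdsWithin 0 (Set.Icc 0 b \ {0}) :=
      nhdsWithin_mono 0 (fun y hy => ⟨⟨hy.1.le, hy.2⟩, ne_of_gt hy.1⟩)
    have h1 := h0.mono_left hmono
    rw [nhdsWithin_Ioc_eq_nhdsGT hb, Metric.tendsto_nhdsWithin_nhds] at h1
    intro ε' hε'
    obtain ⟨δ', hδ', hd⟩ := h1 ε' hε'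
    refine ⟨δ', hδ', fun ρ h1' h2' => ?_⟩
    have := hd (Set.mem_Ioi.mpr h1')
      (by rw [Real.dist_eq, sub_zero, abs_of_pos h1']; exact h2')
    rw [Real.dist_eq] at this
    have hsl : slope p0 0 ρ = ρ⁻¹ * p0 ρ := by
      rw [slope_def_field, hp00, sub_zero, sub_zero, div_eq_inv_mul]
    rwa [hsl] at this
  -- uniform estimate on compact time sets
  have hC : ∀ K : Set ℝ, IsCompact K → K ⊆ Set.Ioo t0 t1 → ∀ ε : ℝ, 0 < ε →
      ∃ δ : ℝ, 0 < δ ∧ ∀ ρ, 0 < ρ → ρ ≤ δ → ρ ≤ ρ0 → ∀ u ∈ K,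
        |Gav (dt (dt γ)) ρ u - h u| ≤ ε := by
    intro K hK hKI ε hε
    set W : ℝ × ℝ → ℝ := fun p => p0' p.1 * Zbar p.1 p.2 with hWdef
    have hC0 : IsCompact (Set.Icc 0 ρ0 ×ˢ K) := isCompact_Icc.prod hK
    have hprodsub : Set.Icc 0 ρ0 ×ˢ K ⊆ Set.Icc 0 ρ0 ×ˢ Set.Ioo t0 t1 :=
      Set.prod_mono (le_refl _) hKI
    have hWcont : ContinuousOn W (Set.Icc 0 ρ0 ×ˢ K) := by
      apply ContinuousOn.mul
      · exact hp0'cont.comp continuousOn_fst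
          (fun p hp => Set.Icc_subset_Icc le_rfl (hρ0b.le) hp.1)
      · exact hZbarcont.mono hprodsub
    obtain ⟨MZ0, hMZ0⟩ := hC0.exists_bound_of_continuousOn (hZbarcont.mono hprodsub)
    set MZ : ℝ := max MZ0 0 with hMZdef
    have hMZnn : 0 ≤ MZ := le_max_right _ _
    set ε2 : ℝ := ε / (4 * (|p0' 0| + 1)) with hε2def
    set ε3 : ℝ := ε / (4 * (MZ + 1)) with hε3def
    have hε2pos : 0 < ε2 := by positivity
    have hε3pos : 0 < ε3 := by
      apply div_pos hε; nlinarith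
    have hWuc := Metric.uniformContinuousOn_iff.mp
      (hC0.uniformContinuousOn_of_continuous hWcont)
    have hZuc := Metric.uniformContinuousOn_iff.mp
      (hC0.uniformContinuousOn_of_continuous (hZbarcont.mono hprodsub))
    obtain ⟨δ1, hδ1, hW1⟩ := hWuc (ε / 2) (by positivity)
    obtain ⟨δ2, hδ2, hZ2⟩ := hZuc ε2 hε2pos
    obtain ⟨δ3, hδ3, hS3⟩ := hslope ε3 hε3pos
    refine ⟨min δ1 (min δ2 δ3) / 2, by positivity, ?_⟩
    intro ρ hρ hρδ hρρ0 u hu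
    have huI := hKI hu
    have hmin : min δ1 (min δ2 δ3) / 2 < min δ1 (min δ2 δ3) :=
      half_lt_self (by positivity)
    have hρδ1 : ρ < δ1 := lt_of_le_of_lt hρδ (hmin.trans_le (min_le_left _ _))
    have hρδ2 : ρ < δ2 :=
      lt_of_le_of_lt hρδ (hmin.trans_le ((min_le_right _ _).trans (min_le_left _ _)))
    have hρδ3 : ρ < δ3 :=
      lt_of_le_of_lt hρδ (hmin.trans_le ((min_le_right _ _).trans (min_le_right _ _)))
    have hWint : IntervalIntegrable (fun y => p0' y * Zbar y u) volume 0 ρ := by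
      have hcontW : ContinuousOn (fun y => p0' y * Zbar y u) (Set.Icc 0 ρ) :=
        ((hp0'cont.mono (Set.Icc_subset_Icc le_rfl (hρρ0.trans hρ0b.le))).mul
          ((hZy u huI).mono (Set.Icc_subset_Icc le_rfl hρρ0)))
      exact (hcontW.mono (by rw [Set.uIcc_of_le hρ.le])).intervalIntegrable
    -- first term
    have hT1 : |Gav (fun y s => p0' y * Zbar y s) ρ u - p0' 0 * Zbar 0 u| ≤ ε / 2 := by
      have heqn : Gav (fun y s => p0' y * Zbar y s) ρ u - p0' 0 * Zbar 0 u
          = ρ⁻¹ * ∫ y in (0:ℝ)..ρ, (p0' y * Zbar y u - p0' 0 * Zbar 0 u) := by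
        rw [Gav, intervalIntegral.integral_sub hWint intervalIntegrable_const,
          intervalIntegral.integral_const, smul_eq_mul, sub_zero, mul_sub,
          ← mul_assoc, inv_mul_cancel₀ hρ.ne', one_mul]
      have hbnd : ‖∫ y in (0:ℝ)..ρ, (p0' y * Zbar y u - p0' 0 * Zbar 0 u)‖
          ≤ ε / 2 * |ρ - 0| := by
        apply intervalIntegral.norm_integral_le_of_norm_le_const
        intro y hy
        rw [Set.uIoc_of_le hρ.le] at hy
        have hy1 : ((y, u) : ℝ × ℝ) ∈ Set.Icc 0 ρ0 ×ˢ K :=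
          ⟨⟨hy.1.le, hy.2.trans hρρ0⟩, hu⟩
        have hy2 : ((0, u) : ℝ × ℝ) ∈ Set.Icc 0 ρ0 ×ˢ K := ⟨⟨le_rfl, hρ0.le⟩, hu⟩
        have hdist : dist ((y, u) : ℝ × ℝ) ((0, u) : ℝ × ℝ) < δ1 := by
          rw [Prod.dist_eq]
          simp only [Real.dist_eq, sub_self, abs_zero, sub_zero]
          rw [max_eq_left (abs_nonneg y)]
          rw [abs_of_pos hy.1]
          exact lt_of_le_of_lt hy.2 hρδ1
        have := hW1 _ hy1 _ hy2 hdist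
        rw [Real.dist_eq] at this
        simpa [hWdef, Real.norm_eq_abs] using this.le
      rw [heqn, abs_mul, abs_of_pos (inv_pos.mpr hρ)]
      rw [Real.norm_eq_abs] at hbnd
      calc ρ⁻¹ * |∫ y in (0:ℝ)..ρ, (p0' y * Zbar y u - p0' 0 * Zbar 0 u)|
          ≤ ρ⁻¹ * (ε / 2 * |ρ - 0|) := by
            exact mul_le_mul_of_nonneg_left hbnd (inv_pos.mpr hρ).le
        _ = ε / 2 := by
            rw [sub_zero, abs_of_pos hρ]; field_simp
    -- second term
    have hZρu : |Zbar ρ u| ≤ MZ := by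
      have := hMZ0 (ρ, u) ⟨⟨hρ.le, hρρ0⟩, hu⟩
      rw [Real.norm_eq_abs] at this
      exact this.trans (le_max_left _ _)
    have hZd : |Zbar ρ u - Zbar 0 u| ≤ ε2 := by
      have hy1 : ((ρ, u) : ℝ × ℝ) ∈ Set.Icc 0 ρ0 ×ˢ K := ⟨⟨hρ.le, hρρ0⟩, hu⟩
      have hy2 : ((0, u) : ℝ × ℝ) ∈ Set.Icc 0 ρ0 ×ˢ K := ⟨⟨le_rfl, hρ0.le⟩, hu⟩
      have hdist : dist ((ρ, u) : ℝ × ℝ) ((0, u) : ℝ × ℝ) < δ2 := by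
        rw [Prod.dist_eq]
        simp only [Real.dist_eq, sub_self, abs_zero, sub_zero]
        rw [max_eq_left (abs_nonneg ρ), abs_of_pos hρ]
        exact hρδ2
      have := hZ2 _ hy1 _ hy2 hdist
      rw [Real.dist_eq] at this
      exact this.le
    have hT2 : |ρ⁻¹ * p0 ρ * Zbar ρ u - p0' 0 * Zbar 0 u| ≤ ε / 2 := by
      have hid : ρ⁻¹ * p0 ρ * Zbar ρ u - p0' 0 * Zbar 0 u
          = (ρ⁻¹ * p0 ρ - p0' 0) * Zbar ρ u + p0' 0 * (Zbar ρ u - Zbar 0 u) := by ring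
      rw [hid]
      have h1 : |(ρ⁻¹ * p0 ρ - p0' 0) * Zbar ρ u| ≤ ε3 * MZ := by
        rw [abs_mul]
        exact mul_le_mul (hS3 ρ hρ hρδ3).le hZρu (abs_nonneg _) hε3pos.le
      have h2 : |p0' 0 * (Zbar ρ u - Zbar 0 u)| ≤ |p0' 0| * ε2 := by
        rw [abs_mul]
        exact mul_le_mul_of_nonneg_left hZd (abs_nonneg _)
      have e3 : ε3 * (MZ + 1) = ε / 4 := by
        rw [hε3def]; field_simp
      have e2 : ε2 * (|p0' 0| + 1) = ε / 4 := by
        rw [hε2def]; field_simp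
      have hp0nn : 0 ≤ |p0' 0| := abs_nonneg _
      calc |(ρ⁻¹ * p0 ρ - p0' 0) * Zbar ρ u + p0' 0 * (Zbar ρ u - Zbar 0 u)|
          ≤ |(ρ⁻¹ * p0 ρ - p0' 0) * Zbar ρ u| + |p0' 0 * (Zbar ρ u - Zbar 0 u)| :=
            abs_add_le _ _
        _ ≤ ε3 * MZ + |p0' 0| * ε2 := add_le_add h1 h2
        _ ≤ ε / 2 := by nlinarith
    -- combine
    rw [hB ρ hρ hρρ0 u huI]
    set A : ℝ := Gav (fun y s => p0' y * Zbar y s) ρ u - p0' 0 * Zbar 0 u with hAdef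
    set B2 : ℝ := ρ⁻¹ * p0 ρ * Zbar ρ u - p0' 0 * Zbar 0 u with hB2def
    have hdec : (1 - c) * Gav (fun y s => p0' y * Zbar y s) ρ u
        + c * (ρ⁻¹ * p0 ρ) * Zbar ρ u - h u = (1 - c) * A + c * B2 := by
      rw [hAdef, hB2def, hhdef]; ring
    rw [hdec]
    have habs : |(1 - c) * A + c * B2| ≤ (1 - c) * |A| + c * |B2| := by
      refine (abs_add_le _ _).trans ?_
      rw [abs_mul, abs_mul, abs_of_pos (by linarith : (0:ℝ) < 1 - c), abs_of_pos hc0]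
    refine habs.trans ?_
    have h1 : (1 - c) * |A| ≤ (1 - c) * (ε / 2) :=
      mul_le_mul_of_nonneg_left hT1 (by linarith)
    have h2 : c * |B2| ≤ c * (ε / 2) := mul_le_mul_of_nonneg_left hT2 hc0.le
    have h3 : (1 - c) * (ε / 2) + c * (ε / 2) = ε / 2 := by ring
    linarith
  -- the vanishing sequence of radii
  set ρseq : ℕ → ℝ := fun n => ρ0 / (n + 1) with hρseqdef
  have hρseqmem : ∀ n : ℕ, 0 < ρseq n ∧ ρseq n ≤ ρ0 := by
    intro n
    have hn1 : (0:ℝ) < (n:ℝ) + 1 := by positivity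
    constructor
    · exact div_pos hρ0 hn1
    · exact div_le_self hρ0.le (by nlinarith [Nat.cast_nonneg (α := ℝ) n])

  have hρseq0 : Filter.Tendsto ρseq Filter.atTop (nhds 0) := by
    apply Filter.Tendsto.div_atTop (tendsto_const_nhds)
    exact Filter.tendsto_atTop_add_const_right _ 1 tendsto_natCast_atTop_atTop
  -- continuity of h on the time interval
  have hcontAtH : ∀ u ∈ Set.Ioo t0 t1, ContinuousAt h u := by
    intro u hu
    have hg : ContinuousWithinAt (fun s : ℝ => (((0:ℝ), s) : ℝ × ℝ)) (Set.Ioo t0 t1) u :=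
      (continuous_const.prodMk continuous_id).continuousWithinAt
    have h1x : ContinuousWithinAt ((fun p : ℝ × ℝ => Zbar p.1 p.2) ∘ (fun s : ℝ => ((0:ℝ), s)))
        (Set.Ioo t0 t1) u :=
      ContinuousWithinAt.comp (hZbarcont ((0:ℝ), u) ⟨⟨le_rfl, hρ0.le⟩, hu⟩) hg
        (fun s hs => ⟨⟨le_rfl, hρ0.le⟩, hs⟩)
    have h1 : ContinuousWithinAt (fun s => Zbar 0 s) (Set.Ioo t0 t1) u := h1x
    have h2 := h1.continuousAt (hIopen.mem_nhds hu)
    exact continuousAt_const.mul h2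
  -- pointwise convergence of the averages of γ
  have hGlim : ∀ t ∈ Set.Ioo t0 t1,
      Filter.Tendsto (fun n => Gav γ (ρseq n) t) Filter.atTop (nhds (γ 0 t)) := by
    intro t ht
    rw [Metric.tendsto_atTop]
    intro ε hε
    have hg : ContinuousWithinAt (fun y : ℝ => ((y, t) : ℝ × ℝ)) (Set.Ico 0 b) 0 :=
      (continuous_id.prodMk continuous_const).continuousWithinAt
    have h1x : ContinuousWithinAt ((fun p : ℝ × ℝ => γ p.1 p.2) ∘ (fun y : ℝ => (y, t)))
        (Set.Ico 0 b) 0 :=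
      ContinuousWithinAt.comp (hcont ((0:ℝ), t) ⟨⟨le_rfl, hb⟩, ht⟩) hg
        (fun y hy => ⟨hy, ht⟩)
    have h1 : ContinuousWithinAt (fun y => γ y t) (Set.Ico 0 b) 0 := h1x
    rw [Metric.continuousWithinAt_iff] at h1
    obtain ⟨δ, hδ, hd⟩ := h1 (ε / 2) (by positivity)
    obtain ⟨N, hN⟩ := (Metric.tendsto_atTop.mp hρseq0) δ hδ
    refine ⟨N, fun n hn => ?_⟩
    have hρn := hρseqmem n
    have hρnδ : ρseq n < δ := by
      have := hN n hn
      rwa [Real.dist_eq, sub_zero, abs_of_pos hρn.1] at this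
    have hintc : IntervalIntegrable (fun y => γ y t) volume 0 (ρseq n) := by
      have hcontc : ContinuousOn (fun y => γ y t) (Set.Icc 0 (ρseq n)) :=
        (hcont.comp ((continuous_id.prodMk continuous_const).continuousOn)
          (fun y hy => ⟨hy, ht⟩)).mono (hIccIco (ρseq n) hρn.2)
      exact (hcontc.mono (by rw [Set.uIcc_of_le hρn.1.le])).intervalIntegrable
    have hkey : |Gav γ (ρseq n) t - γ 0 t| ≤ ε / 2 := by
      have := Gav_sub_const (fun y => γ y t) (ρseq n) (γ 0 t) (ε / 2) hρn.1 hintc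
        (fun y hy => by
          have hyIco : y ∈ Set.Ico 0 b :=
            ⟨hy.1.le, lt_of_le_of_lt (hy.2.trans hρn.2) hρ0b⟩
          have hdist : dist y (0:ℝ) < δ := by
            rw [Real.dist_eq, sub_zero, abs_of_pos hy.1]
            exact lt_of_le_of_lt hy.2 hρnδ
          have := hd hyIco hdist
          rw [Real.dist_eq] at this
          exact this.le)
      simpa [Gav] using this
    rw [Real.dist_eq]
    exact lt_of_le_of_lt hkey (by linarith)
  -- |s - a| ≤ |t - a| on uIcc
  have habsmem : ∀ a t s : ℝ, s ∈ Set.uIcc a t → |s - a| ≤ |t - a| := by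
    intro a t s hs
    rcases Set.mem_uIcc.mp hs with ⟨h1, h2⟩ | ⟨h1, h2⟩
    · rw [abs_of_nonneg (by linarith)]
      exact (by linarith : s - a ≤ t - a).trans (le_abs_self _)
    · rw [abs_of_nonpos (by linarith)]
      have h3 : -(s - a) ≤ -(t - a) := by linarith
      exact h3.trans (neg_le_abs _)
  -- convergence of the double integrals
  have hDlim : ∀ a ∈ Set.Ioo t0 t1, ∀ t ∈ Set.Ioo t0 t1,
      Filter.Tendsto (fun n => ∫ s in a..t, (∫ u in a..s, Gav (dt (dt γ)) (ρseq n) u))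
        Filter.atTop (nhds (∫ s in a..t, (∫ u in a..s, h u))) := by
    intro a ha t ht
    rw [Metric.tendsto_atTop]
    intro ε hε
    have hKI := huIcc a ha t ht
    set ε' : ℝ := ε / (2 * ((t - a) ^ 2 + 1)) with hε'def
    have hε'pos : 0 < ε' := by positivity
    obtain ⟨δ, hδ, hest⟩ := hC (Set.uIcc a t) isCompact_uIcc hKI ε' hε'pos
    obtain ⟨N, hN⟩ := (Metric.tendsto_atTop.mp hρseq0) δ hδ
    refine ⟨N, fun n hn => ?_⟩
    have hρn := hρseqmem n
    have hρnδ : ρseq n ≤ δ := by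
      have := hN n hn
      rw [Real.dist_eq, sub_zero, abs_of_pos hρn.1] at this
      exact this.le
    have hG2K : ContinuousOn (fun u => Gav (dt (dt γ)) (ρseq n) u) (Set.uIcc a t) :=
      fun u hu => (hG2contAt (ρseq n) hρn.1 hρn.2 u (hKI hu)).continuousWithinAt
    have hHK : ContinuousOn h (Set.uIcc a t) :=
      fun u hu => (hcontAtH u (hKI hu)).continuousWithinAt
    have hinner : ∀ s ∈ Set.uIcc a t,
        |(∫ u in a..s, Gav (dt (dt γ)) (ρseq n) u) - (∫ u in a..s, h u)|
          ≤ ε' * |t - a| := by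
      intro s hs
      have hsub2 : Set.uIcc a s ⊆ Set.uIcc a t :=
        Set.uIcc_subset_uIcc Set.left_mem_uIcc hs
      have hi1 : IntervalIntegrable (fun u => Gav (dt (dt γ)) (ρseq n) u) volume a s :=
        (hG2K.mono hsub2).intervalIntegrable
      have hi2 : IntervalIntegrable h volume a s := (hHK.mono hsub2).intervalIntegrable
      rw [← intervalIntegral.integral_sub hi1 hi2]
      have hbnd : ‖∫ u in a..s, (Gav (dt (dt γ)) (ρseq n) u - h u)‖ ≤ ε' * |s - a| := by
        apply intervalIntegral.norm_integral_le_of_norm_le_const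
        intro u hu
        have huK : u ∈ Set.uIcc a t := hsub2 (Set.uIoc_subset_uIcc hu)
        simpa [Real.norm_eq_abs] using hest (ρseq n) hρn.1 hρnδ hρn.2 u huK
      rw [Real.norm_eq_abs] at hbnd
      exact hbnd.trans (mul_le_mul_of_nonneg_left (habsmem a t s hs) hε'pos.le)
    have ho1 : ContinuousOn (fun s => ∫ u in a..s, Gav (dt (dt γ)) (ρseq n) u)
        (Set.uIcc a t) :=
      intervalIntegral.continuousOn_primitive_interval (hG2K.integrableOn_uIcc)
    have ho2 : ContinuousOn (fun s => ∫ u in a..s, h u) (Set.uIcc a t) :=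
      intervalIntegral.continuousOn_primitive_interval (hHK.integrableOn_uIcc)
    have hfinal : dist (∫ s in a..t, (∫ u in a..s, Gav (dt (dt γ)) (ρseq n) u))
        (∫ s in a..t, (∫ u in a..s, h u)) ≤ (ε' * |t - a|) * |t - a| := by
      rw [Real.dist_eq, ← intervalIntegral.integral_sub ho1.intervalIntegrable
        ho2.intervalIntegrable]
      have hbnd : ‖∫ s in a..t, ((∫ u in a..s, Gav (dt (dt γ)) (ρseq n) u)
          - (∫ u in a..s, h u))‖ ≤ (ε' * |t - a|) * |t - a| := by
        apply intervalIntegral.norm_integral_le_of_norm_le_const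
        intro s hs
        simpa [Real.norm_eq_abs] using hinner s (Set.uIoc_subset_uIcc hs)
      rw [Real.norm_eq_abs] at hbnd
      exact hbnd
    refine lt_of_le_of_lt hfinal ?_
    have hsq : (ε' * |t - a|) * |t - a| = ε' * (t - a) ^ 2 := by
      rw [mul_assoc, abs_mul_abs_self, sq]
    rw [hsq]
    have hkey : ε' * ((t - a) ^ 2 + 1) = ε / 2 := by
      rw [hε'def]; field_simp
    nlinarith [hε'pos, sq_nonneg (t - a)]
  -- anchor point and limiting slope
  set a0 : ℝ := (t0 + t1) / 2 with ha0def
  have ha0 : a0 ∈ Set.Ioo t0 t1 := ⟨by rw [ha0def]; linarith, by rw [ha0def]; linarith⟩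
  set tq : ℝ := (a0 + t1) / 2 with htqdef
  have htqa : a0 < tq := by rw [htqdef]; linarith [ha0.2]
  have htq : tq ∈ Set.Ioo t0 t1 := ⟨lt_trans ha0.1 htqa, by rw [htqdef]; linarith [ha0.2]⟩
  set Dinf : ℝ → ℝ := fun t => ∫ s in a0..t, (∫ u in a0..s, h u) with hDinfdef
  set L : ℝ := (γ 0 tq - γ 0 a0 - Dinf tq) / (tq - a0) with hLdef
  have htqa' : tq - a0 ≠ 0 := sub_ne_zero.mpr (ne_of_gt htqa)
  have hLlim : Filter.Tendsto (fun n => Gav (dt γ) (ρseq n) a0) Filter.atTop (nhds L) := by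
    have hfun : (fun n => Gav (dt γ) (ρseq n) a0)
        = fun n => (Gav γ (ρseq n) tq - Gav γ (ρseq n) a0
            - ∫ s in a0..tq, (∫ u in a0..s, Gav (dt (dt γ)) (ρseq n) u)) / (tq - a0) := by
      funext n
      have hT := hTaylor a0 ha0 tq htq (ρseq n) (hρseqmem n).1 (hρseqmem n).2
      rw [eq_div_iff htqa']
      linarith [hT]
    rw [hfun]
    have hlim := (((hGlim tq htq).sub (hGlim a0 ha0)).sub
      (hDlim a0 ha0 tq htq)).div_const (tq - a0)
    simpa [hLdef, hDinfdef] using hlim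
  -- global integral identity for the boundary curve
  have hstar : ∀ t ∈ Set.Ioo t0 t1, γ 0 t = γ 0 a0 + L * (t - a0) + Dinf t := by
    intro t ht
    have hlim1 : Filter.Tendsto
        (fun n => Gav γ (ρseq n) t - Gav γ (ρseq n) a0
          - Gav (dt γ) (ρseq n) a0 * (t - a0))
        Filter.atTop (nhds (γ 0 t - γ 0 a0 - L * (t - a0))) :=
      ((hGlim t ht).sub (hGlim a0 ha0)).sub (hLlim.mul_const _)
    have hfun2 : (fun n => Gav γ (ρseq n) t - Gav γ (ρseq n) a0
          - Gav (dt γ) (ρseq n) a0 * (t - a0))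
        = fun n => ∫ s in a0..t, (∫ u in a0..s, Gav (dt (dt γ)) (ρseq n) u) :=
      funext fun n => hTaylor a0 ha0 t ht (ρseq n) (hρseqmem n).1 (hρseqmem n).2
    rw [hfun2] at hlim1
    have huniq := tendsto_nhds_unique hlim1 (hDlim a0 ha0 t ht)
    have hDt : Dinf t = ∫ s in a0..t, (∫ u in a0..s, h u) := rfl
    linarith [huniq, hDt.le, hDt.ge]
  -- conclusion
  have hintH : ∀ s ∈ Set.Ioo t0 t1, IntervalIntegrable h volume a0 s := by
    intro s hs
    have hco : ContinuousOn h (Set.uIcc a0 s) :=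
      fun u hu => (hcontAtH u (huIcc a0 ha0 s hs hu)).continuousWithinAt
    exact hco.intervalIntegrable
  have hsmf := ContinuousAt.stronglyMeasurableAtFilter hIopen hcontAtH (μ := volume)
  have hH1 : ∀ t ∈ Set.Ioo t0 t1, HasDerivAt (fun s => ∫ u in a0..s, h u) (h t) t :=
    fun t ht => intervalIntegral.integral_hasDerivAt_right (hintH t ht) (hsmf t ht)
      (hcontAtH t ht)
  have hHcontAt : ∀ s ∈ Set.Ioo t0 t1, ContinuousAt (fun x => ∫ u in a0..x, h u) s :=
    fun s hs => (hH1 s hs).continuousAt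
  have hintH2 : ∀ s ∈ Set.Ioo t0 t1,
      IntervalIntegrable (fun x => ∫ u in a0..x, h u) volume a0 s := by
    intro s hs
    have hco : ContinuousOn (fun x => ∫ u in a0..x, h u) (Set.uIcc a0 s) :=
      fun u hu => (hHcontAt u (huIcc a0 ha0 s hs hu)).continuousWithinAt
    exact hco.intervalIntegrable
  have hsmf2 := ContinuousAt.stronglyMeasurableAtFilter hIopen hHcontAt (μ := volume)
  refine ⟨fun t => L + ∫ u in a0..t, h u, fun t ht => ⟨?_, ?_⟩⟩
  · have hD2 : HasDerivAt Dinf (∫ u in a0..t, h u) t :=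
      intervalIntegral.integral_hasDerivAt_right (hintH2 t ht) (hsmf2 t ht)
        (hHcontAt t ht)
    have hRHS : HasDerivAt (fun s => γ 0 a0 + L * (s - a0) + Dinf s)
        (L + ∫ u in a0..t, h u) t := by
      have h1 : HasDerivAt (fun s : ℝ => γ 0 a0 + L * (s - a0)) L t := by
        simpa using (((hasDerivAt_id t).sub_const a0).const_mul L).const_add (γ 0 a0)
      exact h1.add hD2
    apply hRHS.congr_of_eventuallyEq
    filter_upwards [hIopen.mem_nhds ht] with s hs
    exact hstar s hs
  · have hfin := (hH1 t ht).const_add L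
    simpa [hhdef, hp0'def] using hfin
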